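/- Let 𝔤 = 𝔨 ⊕ 𝔭 be a Cartan decomposition of a finite-dimensional real semisimple Lie algebra 𝔤, and let 𝔰 be a Lie subalgebra of 𝔤 stable under the corresponding Cartan involution, so that 𝔰 = 𝔪 ⊕ 𝔮 with 𝔪 = 𝔰 ∩ 𝔨 and 𝔮 = 𝔰 ∩ 𝔭. Set 𝔩 = [𝔮,𝔮] and 𝔥 = 𝔩 ⊕ 𝔮, and assume 𝔩 ⊆ 𝔪 and that 𝔥 is a semisimple Lie subalgebra of 𝔤. Then: 𝔩 is an ideal of 𝔪; 𝔥 is an ideal of 𝔰; the orthogonal complement 𝔲 of 𝔩 in 𝔪 with respect to the Killing form of 𝔤 is an ideal of 𝔪 and of 𝔰; and 𝔰 = 𝔲 ⊕ 𝔥 is a direct sum of ideals, so in particular [𝔲, 𝔥] = 0. -/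

import Mathlib

/-!
On `𝔪 ⊆ 𝔨` the Killing form is negative definite and on `𝔮 ⊆ 𝔭` positive definite. Definiteness
on `𝔩 ⊆ 𝔪` makes `𝔩` complementary to its Killing-orthogonal, so `𝔪 = 𝔩 ⊕ 𝔲`. For `u ∈ 𝔲` and
`q ∈ 𝔮` the bracket `⁅u, q⁆` lies in `𝔮`, and invariance gives
`K(⁅u, q⁆, ⁅u, q⁆) = K(u, ⁅q, ⁅u, q⁆⁆) = 0` because `⁅q, ⁅u, q⁆⁆ ∈ 𝔩`; definiteness on `𝔭` then
forces `⁅u, q⁆ = 0`, hence `𝔲` centralizes `𝔮` and therefore also `𝔩 = [𝔮, 𝔮]`. Everything else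
is the Jacobi identity and the modular law for subspaces.
-/

open LieAlgebra Submodule

namespace Submodule

variable {R L : Type*} [CommRing R] [LieRing L] [LieAlgebra R L] {Q : Submodule R L}

def bracketSpan (Q : Submodule R L) : Submodule R L :=
  span R {z | ∃ x ∈ Q, ∃ y ∈ Q, z = ⁅x, y⁆}

lemma lie_mem_bracketSpan {a b : L} (ha : a ∈ Q) (hb : b ∈ Q) : ⁅a, b⁆ ∈ Q.bracketSpan :=
  subset_span ⟨a, ha, b, hb, rfl⟩

lemma bracketSpan_le {P : Submodule R L} (h : ∀ a ∈ Q, ∀ b ∈ Q, ⁅a, b⁆ ∈ P) :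
    Q.bracketSpan ≤ P :=
  span_le.2 <| by rintro _ ⟨a, ha, b, hb, rfl⟩; exact h a ha b hb

lemma lie_mem_bracketSpan_of_forall_lie_mem {x : L} (hx : ∀ q ∈ Q, ⁅x, q⁆ ∈ Q) {y : L}
    (hy : y ∈ Q.bracketSpan) : ⁅x, y⁆ ∈ Q.bracketSpan := by
  refine bracketSpan_le (P := Q.bracketSpan.comap (ad R L x)) (fun a ha b hb ↦ ?_) hy
  change ⁅x, ⁅a, b⁆⁆ ∈ Q.bracketSpan
  rw [leibniz_lie]
  exact add_mem (lie_mem_bracketSpan (hx a ha) hb) (lie_mem_bracketSpan ha (hx b hb))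

lemma lie_eq_zero_of_mem_bracketSpan {x : L} (hx : ∀ q ∈ Q, ⁅x, q⁆ = 0) {y : L}
    (hy : y ∈ Q.bracketSpan) : ⁅x, y⁆ = 0 := by
  refine bracketSpan_le (P := LinearMap.ker (ad R L x)) (fun a ha b hb ↦ ?_) hy
  change ⁅x, ⁅a, b⁆⁆ = 0
  rw [leibniz_lie, hx a ha, hx b hb, zero_lie, lie_zero, add_zero]

lemma lie_mem_of_mem_bracketSpan (hQ : ∀ a ∈ Q, ∀ b ∈ Q, ∀ c ∈ Q, ⁅⁅a, b⁆, c⁆ ∈ Q) {q y : L}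
    (hq : q ∈ Q) (hy : y ∈ Q.bracketSpan) : ⁅q, y⁆ ∈ Q := by
  refine bracketSpan_le (P := Q.comap (ad R L q)) (fun a ha b hb ↦ ?_) hy
  change ⁅q, ⁅a, b⁆⁆ ∈ Q
  rw [leibniz_lie, ← lie_skew a ⁅q, b⁆]
  exact add_mem (hQ q hq a ha b hb) (neg_mem (hQ q hq b hb a ha))

lemma eq_inf_sup_inf_of_codisjoint {M : Type*} [AddCommGroup M] [Module R M]
    {K P S : Submodule R M} (hKP : Codisjoint K P)
    (hS : ∀ x ∈ S, ∀ k ∈ K, ∀ p ∈ P, x = k + p → k ∈ S ∧ p ∈ S) : S = S ⊓ K ⊔ S ⊓ P := by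
  refine le_antisymm (fun x hx ↦ ?_) (sup_le inf_le_left inf_le_left)
  obtain ⟨k, hk, p, hp, rfl⟩ := mem_sup.1 (hKP.eq_top ▸ mem_top : x ∈ K ⊔ P)
  obtain ⟨hkS, hpS⟩ := hS _ hx k hk p hp rfl
  exact add_mem (mem_sup_left ⟨hkS, hk⟩) (mem_sup_right ⟨hpS, hp⟩)

end Submodule

namespace LinearMap.BilinForm

section LieAlgebra

variable {R L : Type*} [CommRing R] [LieRing L] [LieAlgebra R L] {B : LinearMap.BilinForm R L}

lemma lie_mem_orthogonal (hB : B.lieInvariant L) {N : Submodule R L} {x : L}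
    (hx : ∀ n ∈ N, ⁅x, n⁆ ∈ N) {u : L} (hu : u ∈ B.orthogonal N) : ⁅x, u⁆ ∈ B.orthogonal N := by
  intro n hn
  rw [← neg_eq_zero, ← hB]
  exact hu _ (hx n hn)

lemma lie_eq_zero_of_mem_orthogonal_bracketSpan (hB : B.lieInvariant L) (hBr : B.IsRefl)
    {Q : Submodule R L} (hQ : ∀ q ∈ Q, B q q = 0 → q = 0) {u q : L}
    (hu : u ∈ B.orthogonal Q.bracketSpan) (hq : q ∈ Q) (huq : ⁅u, q⁆ ∈ Q) : ⁅u, q⁆ = 0 := by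
  refine hQ _ huq ?_
  calc B ⁅u, q⁆ ⁅u, q⁆ = -B ⁅q, u⁆ ⁅u, q⁆ := by
        rw [← lie_skew q u, map_neg, LinearMap.neg_apply, neg_neg]
    _ = B u ⁅q, ⁅u, q⁆⁆ := by rw [hB, neg_neg]
    _ = 0 := hBr _ _ (hu _ (Q.lie_mem_bracketSpan hq huq))

end LieAlgebra

lemma isCompl_orthogonal_of_anisotropic {K V : Type*} [Field K] [AddCommGroup V] [Module K V]
    [FiniteDimensional K V] {B : LinearMap.BilinForm K V} (hB : B.IsRefl) {W : Submodule K V}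
    (hW : ∀ w ∈ W, B w w = 0 → w = 0) : IsCompl W (B.orthogonal W) :=
  (isCompl_orthogonal_iff_disjoint hB).2 <|
    Submodule.disjoint_def.2 fun w hw hw' ↦ hW w hw (hw' w hw)

end LinearMap.BilinForm

section ModularLattice

variable {α : Type*} [Lattice α] [IsModularLattice α] {l m o q : α}

lemma sup_eq_inf_sup_sup_of_le_of_codisjoint [OrderTop α] (hlm : l ≤ m) (hlo : Codisjoint l o) :
    m ⊔ q = m ⊓ o ⊔ (l ⊔ q) := by
  have hm : m = l ⊔ o ⊓ m := by rw [← sup_inf_assoc_of_le o hlm, hlo.eq_top, top_inf_eq]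
  conv_lhs => rw [hm]
  rw [inf_comm, sup_assoc, sup_left_comm]

lemma inf_inf_sup_eq_bot_of_le [OrderBot α] (hlm : l ≤ m) (hlo : Disjoint l o)
    (hmq : Disjoint m q) : m ⊓ o ⊓ (l ⊔ q) = ⊥ := by
  have hm : m ⊓ (l ⊔ q) = l := by
    rw [inf_comm, sup_inf_assoc_of_le q hlm, hmq.symm.eq_bot, sup_bot_eq]
  rw [inf_right_comm, hm, hlo.eq_bot]

end ModularLattice

section InvolutionStable

variable {R L : Type*} [CommRing R] [LieRing L] [LieAlgebra R L] {B : LinearMap.BilinForm R L}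
  {M : LieSubalgebra R L} {Q : Submodule R L}

lemma lie_mem_bracketSpan_sup (hMQ : ∀ m ∈ M, ∀ q ∈ Q, ⁅m, q⁆ ∈ Q)
    (hQM : Q.bracketSpan ≤ M.toSubmodule) {x y : L} (hx : x ∈ M.toSubmodule ⊔ Q)
    (hy : y ∈ Q.bracketSpan ⊔ Q) : ⁅x, y⁆ ∈ Q.bracketSpan ⊔ Q := by
  have hQ : ∀ a ∈ Q, ∀ b ∈ Q, ∀ c ∈ Q, ⁅⁅a, b⁆, c⁆ ∈ Q := fun a ha b hb c hc ↦
    hMQ _ (hQM (Q.lie_mem_bracketSpan ha hb)) c hc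
  obtain ⟨m, hm, q, hq, rfl⟩ := mem_sup.1 hx
  obtain ⟨l, hl, p, hp, rfl⟩ := mem_sup.1 hy
  rw [add_lie, lie_add, lie_add]
  exact add_mem
    (add_mem (mem_sup_left (Q.lie_mem_bracketSpan_of_forall_lie_mem (hMQ m hm) hl))
      (mem_sup_right (hMQ m hm p hp)))
    (add_mem (mem_sup_right (Q.lie_mem_of_mem_bracketSpan hQ hq hl))
      (mem_sup_left (Q.lie_mem_bracketSpan hq hp)))

lemma lie_eq_zero_of_mem_inf_orthogonal (hB : B.lieInvariant L) (hBr : B.IsRefl)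
    (hMQ : ∀ m ∈ M, ∀ q ∈ Q, ⁅m, q⁆ ∈ Q) (hQ : ∀ q ∈ Q, B q q = 0 → q = 0) {u y : L}
    (hu : u ∈ M.toSubmodule ⊓ B.orthogonal Q.bracketSpan) (hy : y ∈ Q.bracketSpan ⊔ Q) :
    ⁅u, y⁆ = 0 := by
  have huQ : ∀ q ∈ Q, ⁅u, q⁆ = 0 := fun q hq ↦
    B.lie_eq_zero_of_mem_orthogonal_bracketSpan hB hBr hQ hu.2 hq (hMQ u hu.1 q hq)
  obtain ⟨l, hl, q, hq, rfl⟩ := mem_sup.1 hy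
  rw [lie_add, Q.lie_eq_zero_of_mem_bracketSpan huQ hl, huQ q hq, add_zero]

lemma lie_mem_inf_orthogonal (hB : B.lieInvariant L) (hBr : B.IsRefl)
    (hMQ : ∀ m ∈ M, ∀ q ∈ Q, ⁅m, q⁆ ∈ Q) (hQ : ∀ q ∈ Q, B q q = 0 → q = 0) {x u : L}
    (hx : x ∈ M.toSubmodule ⊔ Q) (hu : u ∈ M.toSubmodule ⊓ B.orthogonal Q.bracketSpan) :
    ⁅x, u⁆ ∈ M.toSubmodule ⊓ B.orthogonal Q.bracketSpan := by
  obtain ⟨m, hm, q, hq, rfl⟩ := mem_sup.1 hx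
  have hqu : ⁅q, u⁆ = 0 := by
    rw [← lie_skew, lie_eq_zero_of_mem_inf_orthogonal hB hBr hMQ hQ hu (mem_sup_right hq),
      neg_zero]
  rw [add_lie, hqu, add_zero]
  exact ⟨M.lie_mem hm hu.1, B.lie_mem_orthogonal hB
    (fun _ hn ↦ Q.lie_mem_bracketSpan_of_forall_lie_mem (hMQ m hm) hn) hu.2⟩

end InvolutionStable

theorem stabilizer_algebra_decomposition_general
    {𝔤 : Type*} [LieRing 𝔤] [LieAlgebra ℝ 𝔤] [Module.Finite ℝ 𝔤]
    -- the Cartan decomposition 𝔤 = 𝔨 ⊕ 𝔭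
    (𝔨 : LieSubalgebra ℝ 𝔤) (𝔭 : Submodule ℝ 𝔤)
    (hdec : IsCompl 𝔨.toSubmodule 𝔭)
    (h𝔨𝔭 : ∀ x ∈ 𝔨, ∀ y ∈ 𝔭, ⁅x, y⁆ ∈ 𝔭)
    (h𝔨neg : ∀ x ∈ 𝔨, x ≠ 0 → killingForm ℝ 𝔤 x x < 0)
    (h𝔭pos : ∀ x ∈ 𝔭, x ≠ 0 → 0 < killingForm ℝ 𝔤 x x)
    -- a subalgebra 𝔰, stable under the Cartan involution (i.e. the sum of its
    -- intersections with 𝔨 and 𝔭)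
    (𝔰 : LieSubalgebra ℝ 𝔤)
    (h𝔰 : ∀ x ∈ 𝔰, ∀ xk ∈ 𝔨, ∀ xp ∈ 𝔭, x = xk + xp → xk ∈ 𝔰 ∧ xp ∈ 𝔰)
    -- 𝔪 = 𝔰 ∩ 𝔨, 𝔮 = 𝔰 ∩ 𝔭, 𝔩 = [𝔮,𝔮], 𝔥 = 𝔩 ⊕ 𝔮,
    -- 𝔲 = orthogonal complement of 𝔩 in 𝔪 for the Killing form
    (𝔪 : LieSubalgebra ℝ 𝔤) (h𝔪 : 𝔪 = 𝔰 ⊓ 𝔨)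
    (𝔮 : Submodule ℝ 𝔤) (h𝔮 : 𝔮 = 𝔰.toSubmodule ⊓ 𝔭)
    (𝔩 : Submodule ℝ 𝔤) (h𝔩 : 𝔩 = Submodule.span ℝ {z | ∃ x ∈ 𝔮, ∃ y ∈ 𝔮, z = ⁅x, y⁆})
    (𝔥 : Submodule ℝ 𝔤) (h𝔥 : 𝔥 = 𝔩 ⊔ 𝔮)
    (𝔲 : Submodule ℝ 𝔤) (h𝔲 : 𝔲 = 𝔪.toSubmodule ⊓ (killingForm ℝ 𝔤).orthogonal 𝔩)
    -- assume 𝔩 ⊆ 𝔪 ...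
    (h𝔩𝔪 : 𝔩 ≤ 𝔪.toSubmodule) :
    -- 𝔩 is an ideal of 𝔪
    (∀ x ∈ 𝔪, ∀ y ∈ 𝔩, ⁅x, y⁆ ∈ 𝔩) ∧
    -- 𝔥 is an ideal of 𝔰
    (𝔥 ≤ 𝔰.toSubmodule ∧ ∀ x ∈ 𝔰, ∀ y ∈ 𝔥, ⁅x, y⁆ ∈ 𝔥) ∧
    -- 𝔲 is an ideal of 𝔪 and of 𝔰
    (𝔲 ≤ 𝔪.toSubmodule ∧ (∀ x ∈ 𝔪, ∀ y ∈ 𝔲, ⁅x, y⁆ ∈ 𝔲) ∧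
      ∀ x ∈ 𝔰, ∀ y ∈ 𝔲, ⁅x, y⁆ ∈ 𝔲) ∧
    -- 𝔰 = 𝔲 ⊕ 𝔥 is a direct sum of ideals, and in particular [𝔲,𝔥] = 0
    (𝔰.toSubmodule = 𝔲 ⊔ 𝔥 ∧ 𝔲 ⊓ 𝔥 = ⊥ ∧
      ∀ x ∈ 𝔲, ∀ y ∈ 𝔥, ⁅x, y⁆ = 0) := by
  subst h𝔪 h𝔮 h𝔥 h𝔲
  obtain rfl : 𝔩 = (𝔰.toSubmodule ⊓ 𝔭).bracketSpan := h𝔩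
  have hS : 𝔰.toSubmodule = (𝔰 ⊓ 𝔨).toSubmodule ⊔ (𝔰.toSubmodule ⊓ 𝔭) := by
    rw [LieSubalgebra.inf_toSubmodule]
    exact eq_inf_sup_inf_of_codisjoint hdec.codisjoint h𝔰
  have hMQ : ∀ m ∈ 𝔰 ⊓ 𝔨, ∀ q ∈ 𝔰.toSubmodule ⊓ 𝔭, ⁅m, q⁆ ∈ 𝔰.toSubmodule ⊓ 𝔭 :=
    fun m ⟨hms, hmk⟩ q ⟨hqs, hqp⟩ ↦ ⟨𝔰.lie_mem hms hqs, h𝔨𝔭 m hmk q hqp⟩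
  have hMQdisj : Disjoint (𝔰 ⊓ 𝔨).toSubmodule (𝔰.toSubmodule ⊓ 𝔭) :=
    hdec.disjoint.mono (fun _ hx ↦ hx.2) inf_le_right
  have hQ : ∀ q ∈ 𝔰.toSubmodule ⊓ 𝔭, killingForm ℝ 𝔤 q q = 0 → q = 0 := fun q hq h0 ↦
    by_contra fun hne ↦ (h𝔭pos q hq.2 hne).ne' h0
  have hBr : (killingForm ℝ 𝔤).IsRefl := (LieModule.traceForm_isSymm ℝ 𝔤 𝔤).isRefl
  have hB : (killingForm ℝ 𝔤).lieInvariant 𝔤 := LieModule.traceForm_lieInvariant ℝ 𝔤 𝔤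
  have hcompl := (killingForm ℝ 𝔤).isCompl_orthogonal_of_anisotropic hBr fun l hl h0 ↦
    by_contra fun hne ↦ (h𝔨neg l (h𝔩𝔪 hl).2 hne).ne h0
  refine ⟨fun x hx y hy ↦ lie_mem_bracketSpan_of_forall_lie_mem (hMQ x hx) hy,
    ⟨(sup_le_sup_right h𝔩𝔪 _).trans hS.ge,
      fun x hx y hy ↦ lie_mem_bracketSpan_sup hMQ h𝔩𝔪 (hS.le hx) hy⟩,
    ⟨inf_le_left, fun x hx y hy ↦ lie_mem_inf_orthogonal hB hBr hMQ hQ (mem_sup_left hx) hy,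
      fun x hx y hy ↦ lie_mem_inf_orthogonal hB hBr hMQ hQ (hS.le hx) hy⟩,
    hS.trans (sup_eq_inf_sup_sup_of_le_of_codisjoint h𝔩𝔪 hcompl.codisjoint),
    inf_inf_sup_eq_bot_of_le h𝔩𝔪 hcompl.disjoint hMQdisj,
    fun x hx y hy ↦ lie_eq_zero_of_mem_inf_orthogonal hB hBr hMQ hQ hx hy⟩

theorem stabilizer_algebra_decomposition
    {𝔤 : Type*} [LieRing 𝔤] [LieAlgebra ℝ 𝔤] [Module.Finite ℝ 𝔤]
    [LieAlgebra.IsSemisimple ℝ 𝔤]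
    -- the Cartan decomposition 𝔤 = 𝔨 ⊕ 𝔭
    (𝔨 : LieSubalgebra ℝ 𝔤) (𝔭 : Submodule ℝ 𝔤)
    (hdec : IsCompl 𝔨.toSubmodule 𝔭)
    (h𝔨𝔭 : ∀ x ∈ 𝔨, ∀ y ∈ 𝔭, ⁅x, y⁆ ∈ 𝔭)
    (h𝔭𝔭 : ∀ x ∈ 𝔭, ∀ y ∈ 𝔭, ⁅x, y⁆ ∈ 𝔨)
    (h𝔨neg : ∀ x ∈ 𝔨, x ≠ 0 → killingForm ℝ 𝔤 x x < 0)
    (h𝔭pos : ∀ x ∈ 𝔭, x ≠ 0 → 0 < killingForm ℝ 𝔤 x x)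
    -- a subalgebra 𝔰, stable under the Cartan involution (i.e. the sum of its
    -- intersections with 𝔨 and 𝔭)
    (𝔰 : LieSubalgebra ℝ 𝔤)
    (h𝔰 : ∀ x ∈ 𝔰, ∀ xk ∈ 𝔨, ∀ xp ∈ 𝔭, x = xk + xp → xk ∈ 𝔰 ∧ xp ∈ 𝔰)
    -- 𝔪 = 𝔰 ∩ 𝔨, 𝔮 = 𝔰 ∩ 𝔭, 𝔩 = [𝔮,𝔮], 𝔥 = 𝔩 ⊕ 𝔮,
    -- 𝔲 = orthogonal complement of 𝔩 in 𝔪 for the Killing form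
    (𝔪 : LieSubalgebra ℝ 𝔤) (h𝔪 : 𝔪 = 𝔰 ⊓ 𝔨)
    (𝔮 : Submodule ℝ 𝔤) (h𝔮 : 𝔮 = 𝔰.toSubmodule ⊓ 𝔭)
    (𝔩 : Submodule ℝ 𝔤) (h𝔩 : 𝔩 = Submodule.span ℝ {z | ∃ x ∈ 𝔮, ∃ y ∈ 𝔮, z = ⁅x, y⁆})
    (𝔥 : Submodule ℝ 𝔤) (h𝔥 : 𝔥 = 𝔩 ⊔ 𝔮)
    (𝔲 : Submodule ℝ 𝔤) (h𝔲 : 𝔲 = 𝔪.toSubmodule ⊓ (killingForm ℝ 𝔤).orthogonal 𝔩)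
    -- assume 𝔩 ⊆ 𝔪 ...
    (h𝔩𝔪 : 𝔩 ≤ 𝔪.toSubmodule)
    -- ... and that 𝔥 is a semisimple Lie subalgebra of 𝔤
    (h𝔥alg : ∃ H : LieSubalgebra ℝ 𝔤, H.toSubmodule = 𝔥 ∧ LieAlgebra.IsSemisimple ℝ H) :
    -- 𝔩 is an ideal of 𝔪
    (∀ x ∈ 𝔪, ∀ y ∈ 𝔩, ⁅x, y⁆ ∈ 𝔩) ∧
    -- 𝔥 is an ideal of 𝔰
    (𝔥 ≤ 𝔰.toSubmodule ∧ ∀ x ∈ 𝔰, ∀ y ∈ 𝔥, ⁅x, y⁆ ∈ 𝔥) ∧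
    -- 𝔲 is an ideal of 𝔪 and of 𝔰
    (𝔲 ≤ 𝔪.toSubmodule ∧ (∀ x ∈ 𝔪, ∀ y ∈ 𝔲, ⁅x, y⁆ ∈ 𝔲) ∧
      ∀ x ∈ 𝔰, ∀ y ∈ 𝔲, ⁅x, y⁆ ∈ 𝔲) ∧
    -- 𝔰 = 𝔲 ⊕ 𝔥 is a direct sum of ideals, and in particular [𝔲,𝔥] = 0
    (𝔰.toSubmodule = 𝔲 ⊔ 𝔥 ∧ 𝔲 ⊓ 𝔥 = ⊥ ∧
      ∀ x ∈ 𝔲, ∀ y ∈ 𝔥, ⁅x, y⁆ = 0) :=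
  stabilizer_algebra_decomposition_general 𝔨 𝔭 hdec h𝔨𝔭 h𝔨neg h𝔭pos 𝔰 h𝔰 𝔪 h𝔪 𝔮 h𝔮 𝔩 h𝔩 𝔥 h𝔥 𝔲 h𝔲
    h𝔩𝔪
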